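/- For n ≥ 2 and λ > 0, the space of bounded smooth functions U on ℝⁿ satisfying both −ΔU = λU and |∇U|² = λ|U|² pointwise on ℝⁿ is infinite-dimensional. -/

import Mathlib

open MeasureTheory Complex

/-- Partial derivative in direction `i` of a complex-valued function on `ℝⁿ`. -/
noncomputable def pd {n : ℕ} (i : Fin n) (f : EuclideanSpace ℝ (Fin n) → ℂ) :
    EuclideanSpace ℝ (Fin n) → ℂ :=
  fun x => fderiv ℝ f x (EuclideanSpace.single i 1)

/-- The Euclidean Laplacian. -/
noncomputable def lap {n : ℕ} (f : EuclideanSpace ℝ (Fin n) → ℂ) :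
    EuclideanSpace ℝ (Fin n) → ℂ :=
  fun x => ∑ i, pd i (pd i f) x

/-- The plane wave `x ↦ exp(i √λ ω·x)`. -/
noncomputable def planeWave {n : ℕ} (lam : ℝ) (ω : EuclideanSpace ℝ (Fin n)) :
    EuclideanSpace ℝ (Fin n) → ℂ :=
  fun x => Complex.exp (Complex.I * (Real.sqrt lam : ℂ) * ((inner ℝ ω x : ℝ) : ℂ))

/-- The continuous linear map appearing in the exponent of a plane wave. -/
noncomputable def pwL {n : ℕ} (lam : ℝ) (ω : EuclideanSpace ℝ (Fin n)) :
    EuclideanSpace ℝ (Fin n) →L[ℝ] ℂ :=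
  (Complex.I * (Real.sqrt lam : ℂ)) • (Complex.ofRealCLM.comp (innerSL ℝ ω))

lemma pwL_apply {n : ℕ} (lam : ℝ) (ω x : EuclideanSpace ℝ (Fin n)) :
    pwL lam ω x = Complex.I * (Real.sqrt lam : ℂ) * ((inner ℝ ω x : ℝ) : ℂ) := by
  simp [pwL]

lemma planeWave_eq {n : ℕ} (lam : ℝ) (ω : EuclideanSpace ℝ (Fin n)) :
    planeWave lam ω = fun x => Complex.exp (pwL lam ω x) := by
  funext x; simp [planeWave, pwL_apply]

lemma hasFDerivAt_planeWave {n : ℕ} (lam : ℝ) (ω x : EuclideanSpace ℝ (Fin n)) :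
    HasFDerivAt (planeWave lam ω) (planeWave lam ω x • pwL lam ω) x := by
  rw [planeWave_eq]
  exact ((pwL lam ω).hasFDerivAt (x := x)).cexp

lemma pd_planeWave {n : ℕ} (lam : ℝ) (ω : EuclideanSpace ℝ (Fin n)) (i : Fin n) :
    pd i (planeWave lam ω) =
      fun x => (Complex.I * (Real.sqrt lam : ℂ) * ((ω i : ℝ) : ℂ)) * planeWave lam ω x := by
  funext x
  have h := (hasFDerivAt_planeWave lam ω x).fderiv
  simp only [pd, h]
  have : (inner ℝ ω (EuclideanSpace.single i (1:ℝ)) : ℝ) = ω i := by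
    rw [EuclideanSpace.inner_single_right]; simp
  simp [pwL_apply, this]
  ring

lemma contDiff_planeWave {n : ℕ} (lam : ℝ) (ω : EuclideanSpace ℝ (Fin n)) :
    ContDiff ℝ (⊤ : ℕ∞) (planeWave lam ω) := by
  rw [planeWave_eq]
  exact Complex.contDiff_exp.comp (pwL lam ω).contDiff

lemma norm_planeWave {n : ℕ} (lam : ℝ) (ω x : EuclideanSpace ℝ (Fin n)) :
    ‖planeWave lam ω x‖ = 1 := by
  simp only [planeWave, Complex.norm_exp]
  have : (Complex.I * (Real.sqrt lam : ℂ) * ((inner ℝ ω x : ℝ) : ℂ)).re = 0 := by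
    simp [Complex.mul_re]
  rw [this, Real.exp_zero]

lemma pd_pd_planeWave {n : ℕ} (lam : ℝ) (ω : EuclideanSpace ℝ (Fin n)) (i : Fin n)
    (x : EuclideanSpace ℝ (Fin n)) :
    pd i (pd i (planeWave lam ω)) x =
      (Complex.I * (Real.sqrt lam : ℂ) * ((ω i : ℝ) : ℂ))^2 * planeWave lam ω x := by
  rw [pd_planeWave]
  set c := Complex.I * (Real.sqrt lam : ℂ) * ((ω i : ℝ) : ℂ)
  have hdiff : DifferentiableAt ℝ (planeWave lam ω) x :=
    (hasFDerivAt_planeWave lam ω x).differentiableAt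
  have h1 : pd i (fun x => c * planeWave lam ω x) x = c * pd i (planeWave lam ω) x := by
    simp only [pd]
    rw [fderiv_const_mul hdiff]
    simp
  rw [h1, pd_planeWave]
  ring

lemma planeWave_add {n : ℕ} (lam : ℝ) (ω x y : EuclideanSpace ℝ (Fin n)) :
    planeWave lam ω (x + y) = planeWave lam ω x * planeWave lam ω y := by
  simp only [planeWave, inner_add_right]
  rw [← Complex.exp_add]
  push_cast
  ring_nf

lemma planeWave_zero {n : ℕ} (lam : ℝ) (ω : EuclideanSpace ℝ (Fin n)) :
    planeWave lam ω 0 = 1 := by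
  simp [planeWave]

/-- auxiliary coefficients -/
noncomputable def cc (k : ℕ) : ℝ := 1 / Real.sqrt (1 + (k:ℝ)^2)
noncomputable def ss (k : ℕ) : ℝ := (k:ℝ) / Real.sqrt (1 + (k:ℝ)^2)

lemma sqrt_pos' (k : ℕ) : 0 < Real.sqrt (1 + (k:ℝ)^2) :=
  Real.sqrt_pos.2 (by positivity)

lemma cc_sq_add_ss_sq (k : ℕ) : cc k ^ 2 + ss k ^ 2 = 1 := by
  have h := sqrt_pos' k
  have h2 : Real.sqrt (1 + (k:ℝ)^2) ^ 2 = 1 + (k:ℝ)^2 :=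
    Real.sq_sqrt (by positivity)
  rw [cc, ss, div_pow, div_pow, h2, ← add_div, one_pow]
  exact div_self (by positivity)

lemma ss_inj : Function.Injective ss := by
  intro k j h
  have hk := sqrt_pos' k
  have hj := sqrt_pos' j
  have hk2 : Real.sqrt (1 + (k:ℝ)^2) ^ 2 = 1 + (k:ℝ)^2 := Real.sq_sqrt (by positivity)
  have hj2 : Real.sqrt (1 + (j:ℝ)^2) ^ 2 = 1 + (j:ℝ)^2 := Real.sq_sqrt (by positivity)
  rw [ss, ss, div_eq_div_iff hk.ne' hj.ne'] at h
  have h2 := congrArg (· ^ 2) h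
  simp only [mul_pow] at h2
  rw [hk2, hj2] at h2
  have h3 : (k:ℝ)^2 = (j:ℝ)^2 := by nlinarith
  have h4 : |(k:ℝ)| = |(j:ℝ)| := by
    rw [← Real.sqrt_sq_eq_abs, ← Real.sqrt_sq_eq_abs, h3]
  rw [_root_.abs_of_nonneg (by positivity), _root_.abs_of_nonneg (by positivity)] at h4
  exact_mod_cast h4

/-- the direction vectors -/
noncomputable def omg (n k : ℕ) : EuclideanSpace ℝ (Fin n) :=
  WithLp.toLp 2 (fun i => if (i:ℕ) = 0 then cc k else if (i:ℕ) = 1 then ss k else 0)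

lemma sum_sq_omg {n : ℕ} (hn : 2 ≤ n) (k : ℕ) : ∑ i, (omg n k i)^2 = 1 := by
  have h0 : (0:ℕ) < n := by omega
  have h1 : (1:ℕ) < n := by omega
  set i0 : Fin n := ⟨0, h0⟩
  set i1 : Fin n := ⟨1, h1⟩
  have hne : i0 ≠ i1 := by simp [i0, i1, Fin.ext_iff]
  have hsub : ({i0, i1} : Finset (Fin n)) ⊆ Finset.univ := Finset.subset_univ _
  rw [← Finset.sum_subset hsub]
  · rw [Finset.sum_pair hne]
    have e0 : omg n k i0 = cc k := by simp [omg, i0]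
    have e1 : omg n k i1 = ss k := by simp [omg, i1]
    rw [e0, e1, cc_sq_add_ss_sq]
  · intro i _ hi
    simp only [Finset.mem_insert, Finset.mem_singleton, not_or] at hi
    have : (i:ℕ) ≠ 0 ∧ (i:ℕ) ≠ 1 := by
      constructor <;> intro h <;> [exact hi.1 (by simp [i0, Fin.ext_iff, h]);
        exact hi.2 (by simp [i1, Fin.ext_iff, h])]
    simp [omg, this.1, this.2]

/-- plane waves as characters -/
noncomputable def chi (n : ℕ) (lam : ℝ) (k : ℕ) :
    Multiplicative (EuclideanSpace ℝ (Fin n)) →* ℂ where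
  toFun := fun x => planeWave lam (omg n k) (Multiplicative.toAdd x)
  map_one' := planeWave_zero lam (omg n k)
  map_mul' := fun x y => planeWave_add lam (omg n k) _ _

lemma chi_inj {n : ℕ} (hn : 2 ≤ n) {lam : ℝ} (hlam : 0 < lam) :
    Function.Injective (chi n lam) := by
  intro k j h
  by_contra hkj
  have h1 : (1:ℕ) < n := by omega
  set i1 : Fin n := ⟨1, h1⟩
  set a : ℝ := Real.sqrt lam * ss k
  set b : ℝ := Real.sqrt lam * ss j
  have hsl : (0:ℝ) < Real.sqrt lam := Real.sqrt_pos.2 hlam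
  have hab : a ≠ b := by
    intro hh
    exact hkj (ss_inj (mul_left_cancel₀ hsl.ne' hh))
  set t : ℝ := Real.pi / (a - b)
  set x : EuclideanSpace ℝ (Fin n) := t • EuclideanSpace.single i1 1
  have hx : ∀ m : ℕ, (inner ℝ (omg n m) x : ℝ) = t * ss m := by
    intro m
    have : omg n m i1 = ss m := by simp [omg, i1]
    rw [real_inner_smul_right, EuclideanSpace.inner_single_right]
    simp [this]
  have heq : planeWave lam (omg n k) x = planeWave lam (omg n j) x :=
    DFunLike.congr_fun h (Multiplicative.ofAdd x)
  rw [planeWave, planeWave, hx, hx] at heq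
  rw [Complex.exp_eq_exp_iff_exists_int] at heq
  obtain ⟨m, hm⟩ := heq
  have him := congrArg Complex.im hm
  simp only [Complex.add_im, Complex.mul_im, Complex.mul_re, Complex.I_re, Complex.I_im,
    Complex.ofReal_re, Complex.ofReal_im, Complex.intCast_re, Complex.intCast_im,
    Complex.re_ofNat, Complex.im_ofNat] at him
  -- him should say : √lam * (t * ss k) = √lam * (t * ss j) + m * (2 * π)
  have him' : a * t = b * t + (m:ℝ) * (2 * Real.pi) := by
    rw [show a * t = Real.sqrt lam * (t * ss k) by ring,
        show b * t = Real.sqrt lam * (t * ss j) by ring]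
    linarith [him]
  have hsub : (a - b) * t = Real.pi := by
    rw [show t = Real.pi / (a - b) from rfl]
    field_simp [sub_ne_zero.2 hab]
  have hsub' : a * t - b * t = Real.pi := by rw [← hsub]; ring
  have hpi : Real.pi = (m:ℝ) * (2 * Real.pi) := by linarith [hsub', him']
  have hpieq : Real.pi * 1 = Real.pi * ((m:ℝ) * 2) := by linarith [hpi]
  have h12 : (1:ℝ) = (m:ℝ) * 2 := mul_left_cancel₀ Real.pi_ne_zero hpieq
  have : (1:ℤ) = m * 2 := by exact_mod_cast h12
  omega

theorem stmt2 (n : ℕ) (hn : 2 ≤ n) (lam : ℝ) (hlam : 0 < lam) :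
    ∃ f : ℕ → (EuclideanSpace ℝ (Fin n) → ℂ),
      LinearIndependent ℂ f ∧
      ∀ k, ContDiff ℝ (⊤ : ℕ∞) (f k) ∧ (∃ C, ∀ x, ‖f k x‖ ≤ C) ∧
        (∀ x, -lap (f k) x = (lam : ℂ) * f k x) ∧
        (∀ x, ∑ i, ‖pd i (f k) x‖ ^ 2 = lam * ‖f k x‖ ^ 2) := by
  have hsq : ((Real.sqrt lam : ℂ))^2 = (lam : ℂ) := by
    rw [← Complex.ofReal_pow, Real.sq_sqrt hlam.le]
  refine ⟨fun k => planeWave lam (omg n k), ?_, ?_⟩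
  · have hInd := linearIndependent_monoidHom (Multiplicative (EuclideanSpace ℝ (Fin n))) ℂ
    exact hInd.comp (chi n lam) (chi_inj hn hlam)
  · intro k
    refine ⟨contDiff_planeWave lam (omg n k), ⟨1, fun x => (norm_planeWave lam (omg n k) x).le⟩,
      ?_, ?_⟩
    · intro x
      simp only [lap]
      have : ∀ i : Fin n, pd i (pd i (planeWave lam (omg n k))) x =
          (Complex.I * (Real.sqrt lam : ℂ) * ((omg n k i : ℝ) : ℂ))^2 * planeWave lam (omg n k) x :=
        fun i => pd_pd_planeWave lam (omg n k) i x
      rw [Finset.sum_congr rfl (fun i _ => this i), ← Finset.sum_mul]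
      have hsum : ∑ i, (Complex.I * (Real.sqrt lam : ℂ) * ((omg n k i : ℝ) : ℂ))^2
          = -(lam : ℂ) := by
        have : ∀ i : Fin n, (Complex.I * (Real.sqrt lam : ℂ) * ((omg n k i : ℝ) : ℂ))^2
            = -(lam:ℂ) * (((omg n k i)^2 : ℝ) : ℂ) := by
          intro i
          rw [mul_pow, mul_pow, Complex.I_sq, hsq]
          push_cast
          ring
        rw [Finset.sum_congr rfl (fun i _ => this i), ← Finset.mul_sum,
          ← Complex.ofReal_sum]
        rw [sum_sq_omg hn k]
        simp
      rw [hsum]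
      ring
    · intro x
      have hterm : ∀ i : Fin n, ‖pd i (planeWave lam (omg n k)) x‖^2
          = lam * (omg n k i)^2 * ‖planeWave lam (omg n k) x‖^2 := by
        intro i
        rw [pd_planeWave]
        simp only [norm_mul, Complex.norm_I, Complex.norm_real, Real.norm_eq_abs,
          one_mul]
        rw [_root_.abs_of_nonneg (Real.sqrt_nonneg lam)]
        rw [mul_pow, mul_pow, Real.sq_sqrt hlam.le]
        simp [sq_abs]
      rw [Finset.sum_congr rfl (fun i _ => hterm i), ← Finset.sum_mul, ← Finset.mul_sum,
        sum_sq_omg hn k, mul_one]
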